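/- The sequence r ↦ 2^{−r} · (|B_{2r−2}| / |B_{r−1}|) · ζ(r), defined for integers r ≥ 3 with r−1 even (i.e. r odd), tends to infinity as r → ∞. -/

import Mathlib

open scoped BigOperators

/-- The Riemann zeta value `ζ(r) = ∑_{n ≥ 1} n⁻ʳ` as a real number. -/
noncomputable def zetaReal (r : ℕ) : ℝ := ∑' n : ℕ, 1 / ((n : ℝ) + 1) ^ r

/-!
Euler's formula `|B_{2k}| = 2 ζ(2k) (2k)! / (2π)^{2k}` together with `1 ≤ ζ(2k) ≤ ζ(2) < 2`
pins `|B_{2k}|` to `(2k)! / (2π)^{2k}` up to a factor in `[2, 4]`. For `r = 2k + 1` the ratio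
`|B_{4k}| / |B_{2k}|` is then at least `(4k)! / (2 (2k)! (2π)^{2k}) ≥ (2k)! / (2 (2π)^{2k})`,
so the whole term is at least `(2k)! / (4 (4π)^{2k})`, which tends to infinity because the
factorial beats every geometric sequence.
-/

open Real Filter
open scoped Nat

lemma tendsto_factorial_div_pow_atTop {c : ℝ} (hc : 0 < c) :
    Tendsto (fun n : ℕ => (n ! : ℝ) / c ^ n) atTop atTop := by
  have hpos : ∀ᶠ n : ℕ in atTop, c ^ n / n ! ∈ Set.Ioi (0 : ℝ) :=
    Eventually.of_forall fun n => Set.mem_Ioi.mpr (by positivity)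
  refine ((tendsto_nhdsWithin_of_tendsto_nhds_of_eventually_within _
    (FloorSemiring.tendsto_pow_div_factorial_atTop c) hpos).inv_tendsto_nhdsGT_zero).congr
    fun n => ?_
  simp

lemma Nat.factorial_mul_factorial_le_factorial_add (m n : ℕ) : m ! * n ! ≤ (m + n)! :=
  Nat.le_of_dvd (Nat.factorial_pos _) (Nat.factorial_mul_factorial_dvd_factorial_add m n)

section zetaReal

variable {p : ℕ}

lemma hasSum_zetaReal (hp : 1 < p) :
    HasSum (fun n : ℕ => 1 / ((n : ℝ) + 1) ^ p) (zetaReal p) := by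
  have h := (summable_nat_add_iff 1).mpr (summable_one_div_nat_pow.mpr hp)
  exact (h.congr fun n => by push_cast; rfl).hasSum

lemma zetaReal_eq_tsum_one_div_nat_pow (hp : 1 < p) :
    zetaReal p = ∑' n : ℕ, 1 / (n : ℝ) ^ p := by
  rw [(summable_one_div_nat_pow.mpr hp).tsum_eq_zero_add]
  simp [zetaReal, zero_pow (by omega : p ≠ 0)]

lemma one_le_zetaReal (hp : 1 < p) : 1 ≤ zetaReal p := by
  simpa [zetaReal] using (hasSum_zetaReal hp).summable.le_tsum 0 fun n _ => by positivity

lemma zetaReal_two : zetaReal 2 = π ^ 2 / 6 := by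
  rw [zetaReal_eq_tsum_one_div_nat_pow one_lt_two, hasSum_zeta_two.tsum_eq]

lemma zetaReal_le_two (hp : 1 < p) : zetaReal p ≤ 2 := by
  have hle : zetaReal p ≤ zetaReal 2 := by
    refine (hasSum_zetaReal hp).summable.tsum_le_tsum (fun n => ?_)
      (hasSum_zetaReal one_lt_two).summable
    have : (1 : ℝ) ≤ n + 1 := by simp
    exact one_div_le_one_div_of_le (by positivity) (pow_le_pow_right₀ this hp)
  have := pi_lt_d2
  nlinarith [zetaReal_two, pi_pos]

end zetaReal

section bernoulli

variable {k : ℕ}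

lemma abs_bernoulli_two_mul (hk : k ≠ 0) :
    |(bernoulli (2 * k) : ℝ)| = 2 * zetaReal (2 * k) * (2 * k)! / (2 * π) ^ (2 * k) := by
  have hζ := congrArg abs <| (zetaReal_eq_tsum_one_div_nat_pow (by omega)).trans
    (hasSum_zeta_nat hk).tsum_eq
  rw [abs_of_pos (by linarith [one_le_zetaReal (show 1 < 2 * k by omega)])] at hζ
  have h2 : (2 : ℝ) ^ (2 * k) = 2 ^ (2 * k - 1) * 2 := by
    rw [← pow_succ]; congr 1; omega
  simp only [abs_div, abs_mul, abs_pow, abs_neg, abs_one, one_pow, one_mul, abs_two,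
    abs_of_pos pi_pos, Nat.abs_cast] at hζ
  rw [hζ, mul_pow, h2]
  field_simp

lemma le_abs_bernoulli_two_mul (hk : k ≠ 0) :
    2 * (2 * k)! / (2 * π) ^ (2 * k) ≤ |(bernoulli (2 * k) : ℝ)| := by
  rw [abs_bernoulli_two_mul hk]
  have := one_le_zetaReal (show 1 < 2 * k by omega)
  gcongr
  linarith

lemma abs_bernoulli_two_mul_le (hk : k ≠ 0) :
    |(bernoulli (2 * k) : ℝ)| ≤ 4 * (2 * k)! / (2 * π) ^ (2 * k) := by
  rw [abs_bernoulli_two_mul hk]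
  have := zetaReal_le_two (show 1 < 2 * k by omega)
  gcongr
  linarith

lemma factorial_div_le_abs_bernoulli_div (hk : k ≠ 0) :
    (2 * k)! / (2 * (2 * π) ^ (2 * k)) ≤
      |(bernoulli (2 * (2 * k)) : ℝ)| / |(bernoulli (2 * k) : ℝ)| := by
  have hfac : ((2 * k)! * (2 * k)! : ℝ) ≤ (2 * (2 * k))! := by
    exact_mod_cast (two_mul (2 * k)).symm ▸ Nat.factorial_mul_factorial_le_factorial_add _ _
  have hpow : (2 * π) ^ (2 * (2 * k)) = ((2 * π) ^ (2 * k)) ^ 2 := by ring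
  have hB := abs_bernoulli_two_mul_le hk
  calc (2 * k)! / (2 * (2 * π) ^ (2 * k))
      = 2 * ((2 * k)! * (2 * k)!) / (2 * π) ^ (2 * (2 * k)) /
          (4 * (2 * k)! / (2 * π) ^ (2 * k)) := by
        rw [hpow]; field_simp; ring
    _ ≤ 2 * (2 * (2 * k))! / (2 * π) ^ (2 * (2 * k)) /
          (4 * (2 * k)! / (2 * π) ^ (2 * k)) := by gcongr
    _ ≤ _ := div_le_div₀ (abs_nonneg _) (le_abs_bernoulli_two_mul (by omega))
          ((le_abs_bernoulli_two_mul hk).trans_lt' (by positivity)) hB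

end bernoulli

lemma factorial_div_le_ratio_covolume_mass {k : ℕ} (hk : k ≠ 0) :
    (2 * k)! / (4 * (4 * π) ^ (2 * k)) ≤
      (2 : ℝ) ^ (-((2 * k + 1 : ℕ) : ℤ)) *
        (|(bernoulli (2 * (2 * k)) : ℝ)| / |(bernoulli (2 * k) : ℝ)|) * zetaReal (2 * k + 1) := by
  have hratio := factorial_div_le_abs_bernoulli_div hk
  calc (2 * k)! / (4 * (4 * π) ^ (2 * k))
      = (2 : ℝ) ^ (-((2 * k + 1 : ℕ) : ℤ)) * ((2 * k)! / (2 * (2 * π) ^ (2 * k))) * 1 := by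
        rw [zpow_neg, zpow_natCast, pow_succ, show (4 * π) = 2 * (2 * π) by ring, mul_pow]
        field_simp; ring
    _ ≤ _ := by
        gcongr
        exact one_le_zetaReal (by omega)

theorem ratio_covolume_mass_tendsto_atTop :
    Filter.Tendsto
      (fun r : ℕ =>
        (2 : ℝ) ^ (-(r : ℤ)) *
          (|(bernoulli (2 * r - 2) : ℝ)| / |(bernoulli (r - 1) : ℝ)|) * zetaReal r)
      (Filter.atTop ⊓ Filter.principal {r : ℕ | Odd r ∧ 3 ≤ r}) Filter.atTop := by
  have hlower : Tendsto (fun r : ℕ => ((r - 1)! : ℝ) / (4 * (4 * π) ^ (r - 1))) atTop atTop := by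
    have := (tendsto_factorial_div_pow_atTop (by positivity : 0 < 4 * π)).atTop_div_const
      (by norm_num : (0 : ℝ) < 4)
    exact (this.congr fun n => by rw [div_div, mul_comm]).comp (tendsto_sub_atTop_nat 1)
  refine tendsto_atTop_mono' _ ?_ (hlower.mono_left inf_le_left)
  filter_upwards [mem_inf_of_right (mem_principal_self _)] with r ⟨⟨k, hk⟩, hr⟩
  subst hk
  rw [show 2 * (2 * k + 1) - 2 = 2 * (2 * k) by omega, Nat.add_sub_cancel]
  exact factorial_div_le_ratio_covolume_mass (by omega)
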